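/- arXiv:1911.06436 — 3 statements merged into one kernel-verified Lean document; each statement's English description precedes it below -/
import Mathlib

section
/- Let x(α), x(β), x(γ) ∈ [0,1] with x(α) ≥ x(β) ≥ x(γ) and x(α)+x(β)+x(γ) ≤ 2. Then there exist nonnegative reals y_∅, y_α, y_β, y_γ, y_{αβ}, y_{αγ}, y_{βγ} summing to 1 such that y_α + y_{αβ} + y_{αγ} = x(α), y_β + y_{αβ} + y_{βγ} = x(β), and y_γ + y_{αγ} + y_{βγ} = x(γ). -/
theorem stmt_0 (xa xb xg : ℝ)
    (hxa : 0 ≤ xa ∧ xa ≤ 1) (hxb : 0 ≤ xb ∧ xb ≤ 1) (hxg : 0 ≤ xg ∧ xg ≤ 1)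
    (hord1 : xb ≤ xa) (hord2 : xg ≤ xb) (hsum : xa + xb + xg ≤ 2) :
    ∃ ye ya yb yg yab yag ybg : ℝ,
      0 ≤ ye ∧ 0 ≤ ya ∧ 0 ≤ yb ∧ 0 ≤ yg ∧ 0 ≤ yab ∧ 0 ≤ yag ∧ 0 ≤ ybg ∧
      ye + ya + yb + yg + yab + yag + ybg = 1 ∧
      ya + yab + yag = xa ∧ yb + yab + ybg = xb ∧ yg + yag + ybg = xg := by
  obtain ⟨ha0, ha1⟩ := hxa
  obtain ⟨hb0, hb1⟩ := hxb
  obtain ⟨hg0, hg1⟩ := hxg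
  rcases le_or_gt (xa + xb + xg) 1 with h1 | h1
  · exact ⟨1 - (xa + xb + xg), xa, xb, xg, 0, 0, 0, by linarith, ha0, hb0, hg0,
      le_refl 0, le_refl 0, le_refl 0, by ring, by ring, by ring, by ring⟩
  · rcases le_or_gt (xb + xg) 1 with h2 | h2
    · rcases le_or_gt (xa + xb) 1 with h3 | h3
      · exact ⟨0, 1 - xb - xg, xb, 1 - xa - xb, 0, xa + xb + xg - 1, 0,
          le_refl 0, by linarith, hb0, by linarith, le_refl 0, by linarith, le_refl 0,
          by ring, by ring, by ring, by ring⟩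
      · exact ⟨0, 1 - xb - xg, 1 - xa, 0, xa + xb - 1, xg, 0,
          le_refl 0, by linarith, by linarith, le_refl 0, by linarith, hg0, le_refl 0,
          by ring, by ring, by ring, by ring⟩
    · exact ⟨1 - (xa + xb + xg) / 2, 0, 0, 0, (xa + xb - xg) / 2, (xa + xg - xb) / 2,
        (xb + xg - xa) / 2, by linarith, le_refl 0, le_refl 0, le_refl 0,
        by linarith, by linarith, by linarith, by ring, by ring, by ring, by ring⟩
end

section
/- Let G = (V,E) be a graph, b : V → ℕ, and let M be a b-factor of G. Let S ⊆ V, and let (F₀, F₁) be a partition of δ(S) such that b(S) + |F₁| is odd. Then ∑_{e ∈ F₀} x_M(e) + ∑_{e ∈ F₁} (1 − x_M(e)) ≥ 1, where x_M is the characteristic vector of M. -/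
theorem stmt_7 {V E : Type*} [Fintype V] [Fintype E] [DecidableEq V] [DecidableEq E]
    (fst snd : E → V) (b : V → ℕ) (M : Finset E)
    (hM : ∀ v : V, ∑ e ∈ M, ((if fst e = v then 1 else 0) + (if snd e = v then 1 else 0)) = b v)
    (S : Finset V) (F0 F1 : Finset E)
    (hpart : F0 ∪ F1 = Finset.univ.filter (fun e => (fst e ∈ S) ≠ (snd e ∈ S)))
    (hdisj : Disjoint F0 F1)
    (hodd : Odd (∑ v ∈ S, b v + F1.card)) :
    ∑ e ∈ F0, (if e ∈ M then (1:ℝ) else 0) +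
      ∑ e ∈ F1, (1 - (if e ∈ M then (1:ℝ) else 0)) ≥ 1 := by
  classical
  have h2 : (0:ℝ) ≤ ∑ e ∈ F1, (1 - (if e ∈ M then (1:ℝ) else 0)) :=
    Finset.sum_nonneg (fun i _ => by by_cases hi : i ∈ M <;> simp [hi])
  have h3 : (0:ℝ) ≤ ∑ e ∈ F0, (if e ∈ M then (1:ℝ) else 0) :=
    Finset.sum_nonneg (fun i _ => by by_cases hi : i ∈ M <;> simp [hi])
  by_cases h0 : ∃ e ∈ F0, e ∈ M
  · obtain ⟨e, he, heM⟩ := h0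
    have h1 : (1:ℝ) ≤ ∑ e ∈ F0, (if e ∈ M then (1:ℝ) else 0) := by
      have := Finset.single_le_sum (f := fun e => if e ∈ M then (1:ℝ) else 0)
        (fun i _ => by by_cases hi : i ∈ M <;> simp [hi]) he
      simpa [heM] using this
    linarith
  by_cases h1 : ∃ e ∈ F1, e ∉ M
  · obtain ⟨e, he, heM⟩ := h1
    have h4 : (1:ℝ) ≤ ∑ e ∈ F1, (1 - (if e ∈ M then (1:ℝ) else 0)) := by
      have := Finset.single_le_sum (f := fun e => 1 - (if e ∈ M then (1:ℝ) else 0))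
        (fun i _ => by by_cases hi : i ∈ M <;> simp [hi]) he
      simpa [heM] using this
    linarith
  exfalso
  push_neg at h0 h1
  -- M ∩ δ(S) = F1
  have hMf : M.filter (fun e => (fst e ∈ S) ≠ (snd e ∈ S)) = F1 := by
    ext e
    simp only [Finset.mem_filter]
    constructor
    · rintro ⟨heM, hδ⟩
      have : e ∈ F0 ∪ F1 := by
        rw [hpart]
        simp only [Finset.mem_filter, Finset.mem_univ, true_and]
        exact hδ
      rcases Finset.mem_union.mp this with h | h
      · exact absurd heM (h0 e h)
      · exact h
    · intro he
      refine ⟨h1 e he, ?_⟩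
      have : e ∈ F0 ∪ F1 := Finset.mem_union_right _ he
      rw [hpart] at this
      simpa using this
  -- parity
  have key : ((∑ v ∈ S, b v : ℕ) : ZMod 2) = (F1.card : ZMod 2) := by
    push_cast
    have step1 : (∑ v ∈ S, (b v : ZMod 2)) =
        ∑ e ∈ M, ∑ v ∈ S, ((if fst e = v then (1:ZMod 2) else 0)
          + (if snd e = v then (1:ZMod 2) else 0)) := by
      rw [Finset.sum_comm]
      refine Finset.sum_congr rfl (fun v _ => ?_)
      rw [← hM v]
      push_cast
      rfl
    rw [step1]
    have step2 : ∀ e ∈ M, (∑ v ∈ S, ((if fst e = v then (1:ZMod 2) else 0)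
          + (if snd e = v then (1:ZMod 2) else 0)))
        = (if (fst e ∈ S) ≠ (snd e ∈ S) then (1:ZMod 2) else 0) := by
      intro e _
      rw [Finset.sum_add_distrib, Finset.sum_ite_eq, Finset.sum_ite_eq]
      by_cases hp : fst e ∈ S <;> by_cases hq : snd e ∈ S <;> simp [hp, hq] <;> decide
    rw [Finset.sum_congr rfl step2, Finset.sum_boole, hMf]
  have heven : ((∑ v ∈ S, b v + F1.card : ℕ) : ZMod 2) = 0 := by
    rw [Nat.cast_add, key, ← two_mul]
    have h2' : (2:ZMod 2) = 0 := by decide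
    rw [h2', zero_mul]
  rw [ZMod.natCast_eq_zero_iff] at heven
  exact (Nat.not_even_iff_odd.mpr hodd) (even_iff_two_dvd.mpr heven)
end

section
/- Let M ⊆ E be a T-free b-factor in a graph G (i.e., M is a b-factor containing no triangle of the family 𝒯 entirely), where 𝒯 consists of edge-disjoint triangles. Let (S, F₀, F₁) be such that (F₀,F₁) partitions δ(S) and b(S)+|F₁| is odd. If for every triangle T ∈ 𝒯 crossing the cut δ(S) one has |M ∩ E(T) ∩ δ(S)| ≡ |F₁ ∩ E(T)| (mod 2), and M ∩ (F₀ \ ⋃_T E(T)) = ∅ and F₁ \ ⋃_T E(T) ⊆ M, then a contradiction follows; i.e., this configuration is impossible. -/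
theorem stmt_8 {V E : Type*} [Fintype V] [Fintype E] [DecidableEq V] [DecidableEq E]
    (fst snd : E → V) (b : V → ℕ) (M : Finset E)
    (𝒯 : Finset (Finset E))
    (hedgedisj : ∀ T ∈ 𝒯, ∀ T' ∈ 𝒯, T ≠ T' → Disjoint T T')
    (hbfac : ∀ v : V, ∑ e ∈ M, ((if fst e = v then 1 else 0) + (if snd e = v then 1 else 0)) = b v)
    (hfree : ∀ T ∈ 𝒯, ¬ T ⊆ M)
    (S : Finset V) (F0 F1 : Finset E)
    (δS : Finset E)
    (hδS : δS = Finset.univ.filter (fun e => (fst e ∈ S) ≠ (snd e ∈ S)))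
    (hpart : F0 ∪ F1 = δS) (hdisj : Disjoint F0 F1)
    (hodd : Odd (∑ v ∈ S, b v + F1.card))
    (hparity : ∀ T ∈ 𝒯, (T ∩ δS).Nonempty →
      (M ∩ T ∩ δS).card ≡ (F1 ∩ T).card [MOD 2])
    (hF0 : M ∩ (F0 \ (𝒯.filter (fun T => (T ∩ δS).Nonempty)).biUnion id) = ∅)
    (hF1 : F1 \ (𝒯.filter (fun T => (T ∩ δS).Nonempty)).biUnion id ⊆ M) :
    False := by
  classical
  set 𝒯' : Finset (Finset E) := 𝒯.filter (fun T => (T ∩ δS).Nonempty) with h𝒯'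
  set U : Finset E := 𝒯'.biUnion id with hU
  -- Step 1: degree sum formula
  have h1 : ∑ v ∈ S, b v
      = ∑ e ∈ M, ((if fst e ∈ S then 1 else 0) + (if snd e ∈ S then 1 else 0)) := by
    calc ∑ v ∈ S, b v
        = ∑ v ∈ S, ∑ e ∈ M, ((if fst e = v then 1 else 0) + (if snd e = v then 1 else 0)) :=
          Finset.sum_congr rfl fun v _ => (hbfac v).symm
      _ = ∑ e ∈ M, ∑ v ∈ S, ((if fst e = v then 1 else 0) + (if snd e = v then 1 else 0)) :=
          Finset.sum_comm
      _ = ∑ e ∈ M, ((if fst e ∈ S then 1 else 0) + (if snd e ∈ S then 1 else 0)) := by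
          refine Finset.sum_congr rfl fun e _ => ?_
          rw [Finset.sum_add_distrib, Finset.sum_ite_eq, Finset.sum_ite_eq]
  have key1 : ((∑ v ∈ S, b v : ℕ) : ZMod 2) = ((M ∩ δS).card : ZMod 2) := by
    rw [h1, ← Finset.filter_mem_eq_inter, Finset.card_filter]
    push_cast
    refine Finset.sum_congr rfl fun e _ => ?_
    by_cases ha : fst e ∈ S <;> by_cases hb' : snd e ∈ S <;>
      simp [hδS, ha, hb'] <;> decide
  -- disjointness of triangles in 𝒯'
  have hdisj' : ∀ X : Finset E, (X ∩ U).card = ∑ T ∈ 𝒯', (X ∩ T).card := by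
    intro X
    have hXU : X ∩ U = 𝒯'.biUnion (fun T => X ∩ T) := by
      ext e
      simp only [hU, Finset.mem_inter, Finset.mem_biUnion, id]
      tauto
    rw [hXU]
    refine Finset.card_biUnion ?_
    intro T hT T' hT' hne
    have h1 := hedgedisj T (Finset.mem_filter.mp hT).1 T' (Finset.mem_filter.mp hT').1 hne
    exact h1.mono Finset.inter_subset_right Finset.inter_subset_right
  -- edges outside triangles
  have hrest : (M ∩ δS) \ U = F1 \ U := by
    ext e
    simp only [Finset.mem_sdiff, Finset.mem_inter]
    constructor
    · rintro ⟨⟨heM, heδ⟩, heU⟩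
      refine ⟨?_, heU⟩
      rw [← hpart] at heδ
      rcases Finset.mem_union.mp heδ with h | h
      · exfalso
        have : e ∈ M ∩ (F0 \ 𝒯'.biUnion id) :=
          Finset.mem_inter.mpr ⟨heM, Finset.mem_sdiff.mpr ⟨h, heU⟩⟩
        rw [hF0] at this
        exact Finset.notMem_empty e this
      · exact h
    · rintro ⟨heF, heU⟩
      refine ⟨⟨hF1 (Finset.mem_sdiff.mpr ⟨heF, heU⟩), ?_⟩, heU⟩
      rw [← hpart]
      exact Finset.mem_union_right _ heF
  -- Step 2: parity across triangles
  have key2 : (((M ∩ δS).card : ℕ) : ZMod 2) = ((F1.card : ℕ) : ZMod 2) := by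
    have hM : (M ∩ δS).card = ((M ∩ δS) ∩ U).card + ((M ∩ δS) \ U).card :=
      (Finset.card_inter_add_card_sdiff _ _).symm
    have hF : F1.card = (F1 ∩ U).card + (F1 \ U).card :=
      (Finset.card_inter_add_card_sdiff _ _).symm
    rw [hM, hF, hrest, hdisj' (M ∩ δS), hdisj' F1]
    push_cast
    congr 1
    refine Finset.sum_congr rfl fun T hT => ?_
    have hmem := Finset.mem_filter.mp hT
    have := hparity T hmem.1 hmem.2
    rw [Finset.inter_right_comm] at this
    exact (ZMod.natCast_eq_natCast_iff _ _ _).mpr this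
  have hzero : ((∑ v ∈ S, b v + F1.card : ℕ) : ZMod 2) = 0 := by
    rw [Nat.cast_add, key1, key2, ← two_mul]
    exact mul_eq_zero_of_left (by decide) _
  rw [ZMod.natCast_eq_zero_iff] at hzero
  have := Nat.odd_iff.mp hodd
  omega
end
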